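/- arXiv:1801.01594 — 2 statements merged into one kernel-verified Lean document; each statement's English description precedes it below -/
import Mathlib

section
/- The Gaussian mechanism M(d) = f(d) + N(0, σ²) applied to a real-valued function f with ℓ₂-sensitivity Δf satisfies (ε, δ)-differential privacy for any ε ∈ (0,1), provided σ ≥ Δf · √(2 ln(1.25/δ)) / ε. -/
/-!
Let `p₁, p₂` be the densities of `N(f d, σ²)` and `N(f d', σ²)`. On the part of `S` where
`p₁ ≤ e^ε p₂` the mass of `N(f d, σ²)` is at most `e^ε` times that of `N(f d', σ²)`, so it is
enough that the set where the privacy loss exceeds `ε` has `N(f d, σ²)`-mass at most `δ`. For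
Gaussians this set is a half-line, and after standardising its mass is `P(Z > s - ε/(2s))` for a
standard normal `Z`, where `s = σε/|f d - f d'| ≥ √(2 ln(1.25/δ))`. Shifting the density gives
`P(Z > t) ≤ e^{-t²/2}/2` for `t ≥ 0`, hence the mass is at most `e^{ε/2} δ/2.5 ≤ δ`. If the
threshold `s - ε/(2s)` is negative, then `ln(1.25/δ) < 1/4`, so `δ > 0.93` and the crude bound
`P(Z > t) ≤ 1/2 + |t|/√(2π)` suffices.
-/

open MeasureTheory

/-- `(ε, δ)`-differential privacy for a measure-valued mechanism. -/
def ApproxDPM {D R : Type*} [MeasurableSpace R] (adj : D → D → Prop)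
    (M : D → Measure R) (ε δ : ℝ) : Prop :=
  ∀ d d', adj d d' → ∀ S : Set R, MeasurableSet S →
    M d S ≤ ENNReal.ofReal (Real.exp ε) * M d' S + ENNReal.ofReal δ

open ProbabilityTheory Set
open scoped ENNReal NNReal Real

lemma withDensity_le_mul_add_withDensity_setOf_lt {α : Type*} [MeasurableSpace α]
    (μ : Measure α) {f g : α → ℝ≥0∞} (hf : Measurable f) (hg : Measurable g) (c : ℝ≥0∞)
    {S : Set α} (hS : MeasurableSet S) :
    μ.withDensity f S ≤ c * μ.withDensity g S + μ.withDensity f {x | c * g x < f x} := by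
  set B := {x | c * g x < f x}
  have hB : MeasurableSet B := measurableSet_lt (hg.const_mul c) hf
  have hgood : μ.withDensity f (S \ B) ≤ c * μ.withDensity g S := by
    rw [withDensity_apply _ (hS.diff hB), withDensity_apply _ hS,
      ← lintegral_const_mul _ hg]
    calc ∫⁻ x in S \ B, f x ∂μ ≤ ∫⁻ x in S \ B, c * g x ∂μ :=
          setLIntegral_mono (hg.const_mul c) fun x hx => not_lt.mp hx.2
      _ ≤ ∫⁻ x in S, c * g x ∂μ := lintegral_mono_set sdiff_subset
  calc μ.withDensity f S ≤ μ.withDensity f (S ∩ B) + μ.withDensity f (S \ B) :=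
        measure_le_inter_add_sdiff _ _ _
    _ ≤ μ.withDensity f B + c * μ.withDensity g S :=
        add_le_add (measure_mono inter_subset_right) hgood
    _ = _ := add_comm _ _

lemma gaussianPDFReal_eq_exp_mul (m₁ m₂ : ℝ) (v : ℝ≥0) (x : ℝ) :
    gaussianPDFReal m₁ v x
      = Real.exp (((x - m₂) ^ 2 - (x - m₁) ^ 2) / (2 * v)) * gaussianPDFReal m₂ v x := by
  simp only [gaussianPDFReal]
  rw [mul_left_comm, ← Real.exp_add]
  ring_nf

lemma setOf_ofReal_exp_mul_gaussianPDF_lt {v : ℝ≥0} (hv : v ≠ 0) (ε m₁ m₂ : ℝ) :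
    {x | ENNReal.ofReal (Real.exp ε) * gaussianPDF m₂ v x < gaussianPDF m₁ v x}
      = {x | 2 * v * ε < (x - m₂) ^ 2 - (x - m₁) ^ 2} := by
  ext x
  have hv' : (0 : ℝ) < 2 * v := by positivity
  rw [mem_ofPred_eq, mem_ofPred_eq, gaussianPDF, gaussianPDF,
    ← ENNReal.ofReal_mul (Real.exp_nonneg ε),
    ENNReal.ofReal_lt_ofReal_iff (gaussianPDFReal_pos _ _ _ hv), gaussianPDFReal_eq_exp_mul m₁ m₂,
    mul_lt_mul_iff_left₀ (gaussianPDFReal_pos _ _ _ hv), Real.exp_lt_exp, lt_div_iff₀ hv',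
    mul_comm ε]

lemma gaussianReal_map_mul_sub_self (m k : ℝ) (v : ℝ≥0) :
    (gaussianReal m v).map (fun x => k * (x - m))
      = gaussianReal 0 (NNReal.mk (k ^ 2) (sq_nonneg k) * v) := by
  have hcomp : (fun x => k * (x - m)) = (k * ·) ∘ (· - m) := rfl
  rw [hcomp, ← Measure.map_map (by fun_prop) (by fun_prop), gaussianReal_map_sub_const,
    gaussianReal_map_const_mul, sub_self, mul_zero]

lemma gaussianReal_Ioi_self (μ : ℝ) {v : ℝ≥0} (hv : v ≠ 0) :
    gaussianReal μ v (Ioi μ) = 2⁻¹ := by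
  have := nullSingletonClass_gaussianReal (μ := μ) hv
  have hsymm : gaussianReal μ v (Iic μ) = gaussianReal μ v (Ioi μ) := by
    have h := gaussianReal_map_const_sub (μ := μ) (v := v) (2 * μ)
    rw [show 2 * μ - μ = μ by ring] at h
    rw [← measure_congr Iio_ae_eq_Iic, ← h, Measure.map_apply (by fun_prop) measurableSet_Ioi]
    congr 1
    ext x
    simp only [mem_preimage, mem_Ioi, mem_Iio]
    constructor <;> intro <;> linarith
  have htotal : gaussianReal μ v (Iic μ) + gaussianReal μ v (Ioi μ) = 1 := by
    rw [← measure_union (Iic_disjoint_Ioi le_rfl) measurableSet_Ioi, Iic_union_Ioi, measure_univ]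
  rw [hsymm, ← two_mul] at htotal
  exact ENNReal.eq_inv_of_mul_eq_one_left (by rwa [mul_comm])

lemma gaussianPDFReal_le_inv_sqrt (μ : ℝ) (v : ℝ≥0) (x : ℝ) :
    gaussianPDFReal μ v x ≤ (√(2 * π * v))⁻¹ :=
  mul_le_of_le_one_right (by positivity) <| Real.exp_le_one_iff.mpr <|
    div_nonpos_of_nonpos_of_nonneg (neg_nonpos.mpr (sq_nonneg _)) (by positivity)

lemma gaussianReal_Ioi_le_exp {v : ℝ≥0} (hv : v ≠ 0) {t : ℝ} (ht : 0 ≤ t) :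
    gaussianReal 0 v (Ioi t) ≤ ENNReal.ofReal (Real.exp (-t ^ 2 / (2 * v)) / 2) := by
  have hshift : gaussianReal 0 v (Ioi t) = gaussianReal (-t) v (Ioi 0) := by
    rw [← zero_sub, ← gaussianReal_map_sub_const, Measure.map_apply (by fun_prop) measurableSet_Ioi]
    congr 1
    ext x
    simp
  have hpdf : ∀ x ∈ Ioi (0 : ℝ),
      gaussianPDF (-t) v x ≤ ENNReal.ofReal (Real.exp (-t ^ 2 / (2 * v))) * gaussianPDF 0 v x := by
    intro x hx
    rw [gaussianPDF, gaussianPDF, ← ENNReal.ofReal_mul (Real.exp_nonneg _),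
      gaussianPDFReal_eq_exp_mul (-t) 0]
    refine ENNReal.ofReal_le_ofReal <| mul_le_mul_of_nonneg_right ?_ (gaussianPDFReal_nonneg _ _ _)
    refine Real.exp_le_exp.mpr <| div_le_div_of_nonneg_right ?_ (by positivity)
    nlinarith [mul_nonneg ht (le_of_lt hx)]
  calc gaussianReal 0 v (Ioi t)
      ≤ ∫⁻ x in Ioi 0, ENNReal.ofReal (Real.exp (-t ^ 2 / (2 * v))) * gaussianPDF 0 v x := by
        rw [hshift, gaussianReal_apply _ hv]
        exact setLIntegral_mono (by fun_prop) hpdf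
    _ = ENNReal.ofReal (Real.exp (-t ^ 2 / (2 * v)) / 2) := by
        rw [lintegral_const_mul _ (measurable_gaussianPDF _ _), ← gaussianReal_apply _ hv,
          gaussianReal_Ioi_self 0 hv, ENNReal.ofReal_div_of_pos two_pos, ENNReal.ofReal_ofNat,
          ENNReal.div_eq_inv_mul, mul_comm]

lemma gaussianReal_Ioi_le_of_nonpos {v : ℝ≥0} (hv : v ≠ 0) {t : ℝ} (ht : t ≤ 0) :
    gaussianReal 0 v (Ioi t) ≤ ENNReal.ofReal (2⁻¹ + -t / √(2 * π * v)) := by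
  have hcenter : gaussianReal 0 v (Ioc t 0) ≤ ENNReal.ofReal (-t / √(2 * π * v)) := by
    calc gaussianReal 0 v (Ioc t 0) ≤ ∫⁻ _ in Ioc t 0, ENNReal.ofReal (√(2 * π * v))⁻¹ := by
          rw [gaussianReal_apply _ hv]
          exact setLIntegral_mono measurable_const fun x _ =>
            ENNReal.ofReal_le_ofReal (gaussianPDFReal_le_inv_sqrt 0 v x)
      _ = ENNReal.ofReal (-t / √(2 * π * v)) := by
        rw [setLIntegral_const, Real.volume_Ioc, ← ENNReal.ofReal_mul (by positivity), zero_sub,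
          mul_comm, div_eq_mul_inv]
  calc gaussianReal 0 v (Ioi t) = gaussianReal 0 v (Ioc t 0 ∪ Ioi 0) := by
        rw [Ioc_union_Ioi_eq_Ioi ht]
    _ ≤ gaussianReal 0 v (Ioc t 0) + gaussianReal 0 v (Ioi 0) := measure_union_le _ _
    _ ≤ ENNReal.ofReal (-t / √(2 * π * v)) + ENNReal.ofReal 2⁻¹ := by
        rw [gaussianReal_Ioi_self 0 hv, ENNReal.ofReal_inv_of_pos two_pos, ENNReal.ofReal_ofNat]
        gcongr
    _ = ENNReal.ofReal (2⁻¹ + -t / √(2 * π * v)) := by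
        rw [add_comm,
          ENNReal.ofReal_add (by norm_num) (div_nonneg (by linarith) (Real.sqrt_nonneg _))]

lemma gaussianReal_setOf_ofReal_exp_mul_gaussianPDF_lt {σ : ℝ} (hσ : 0 < σ) {m₁ m₂ : ℝ}
    (hm : m₁ ≠ m₂) (ε : ℝ) :
    gaussianReal m₁ (σ ^ 2).toNNReal {x | ENNReal.ofReal (Real.exp ε) *
        gaussianPDF m₂ (σ ^ 2).toNNReal x < gaussianPDF m₁ (σ ^ 2).toNNReal x}
      = gaussianReal 0 1 (Ioi (σ * ε / |m₁ - m₂| - |m₁ - m₂| / (2 * σ))) := by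
  set a := m₁ - m₂
  have ha : a ≠ 0 := sub_ne_zero.mpr hm
  have hσ2 : ((σ ^ 2).toNNReal : ℝ) = σ ^ 2 := Real.coe_toNNReal _ (sq_nonneg σ)
  set k := a / (|a| * σ)
  have hk : (NNReal.mk (k ^ 2) (sq_nonneg k) * (σ ^ 2).toNNReal : ℝ≥0) = 1 := by
    ext
    rw [NNReal.coe_mul, NNReal.coe_mk, hσ2, NNReal.coe_one, div_pow, mul_pow, sq_abs]
    field_simp
  rw [setOf_ofReal_exp_mul_gaussianPDF_lt (by positivity) ε, ← hk,
    ← gaussianReal_map_mul_sub_self m₁, Measure.map_apply (by fun_prop) measurableSet_Ioi]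
  congr 1
  ext x
  have key : k * (x - m₁) - (σ * ε / |a| - |a| / (2 * σ))
      = ((x - m₂) ^ 2 - (x - m₁) ^ 2 - 2 * σ ^ 2 * ε) / (2 * |a| * σ) := by
    simp only [k]
    field_simp
    rw [sq_abs]
    ring
  rw [mem_ofPred_eq, mem_preimage, mem_Ioi, hσ2, ← sub_pos, ← sub_pos (a := k * _), key]
  exact (div_pos_iff_of_pos_right (by positivity)).symm

lemma gaussianReal_Ioi_sub_div_le_of_nonneg {ε s L : ℝ} (hε0 : 0 < ε) (hε1 : ε < 1) (hs0 : 0 < s)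
    (hs : 2 * L ≤ s ^ 2) (hτ : 0 ≤ s - ε / (2 * s)) :
    gaussianReal 0 1 (Ioi (s - ε / (2 * s))) ≤ ENNReal.ofReal (1.25 * Real.exp (-L)) := by
  set τ := s - ε / (2 * s)
  have hτ2 : s ^ 2 - ε ≤ τ ^ 2 := by
    have : τ ^ 2 = s ^ 2 - ε + (ε / (2 * s)) ^ 2 := by simp only [τ]; field_simp; ring
    nlinarith [sq_nonneg (ε / (2 * s))]
  have hexp : Real.exp (ε / 2) < 2 :=
    (Real.exp_bound_div_one_sub_of_interval' (by positivity) (by linarith)).trans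
      ((div_lt_iff₀ (by linarith)).mpr (by linarith))
  refine (gaussianReal_Ioi_le_exp one_ne_zero hτ).trans (ENNReal.ofReal_le_ofReal ?_)
  calc Real.exp (-τ ^ 2 / (2 * ((1 : ℝ≥0) : ℝ))) / 2 ≤ Real.exp (ε / 2) * Real.exp (-L) / 2 := by
        rw [← Real.exp_add, NNReal.coe_one]
        gcongr
        linarith
    _ ≤ 1.25 * Real.exp (-L) := by nlinarith [Real.exp_pos (-L)]

lemma gaussianReal_Ioi_sub_div_le_of_neg {ε s L : ℝ} (hε1 : ε < 1) (hL : 0.2 ≤ L) (hs0 : 0 < s)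
    (hs : 2 * L ≤ s ^ 2) (hτ : s - ε / (2 * s) < 0) :
    gaussianReal 0 1 (Ioi (s - ε / (2 * s))) ≤ ENNReal.ofReal (1.25 * Real.exp (-L)) := by
  set τ := s - ε / (2 * s)
  have hsε : 2 * s ^ 2 < ε := by
    have : s < ε / (2 * s) := by linarith
    rw [lt_div_iff₀ (by positivity)] at this
    linarith
  have hexpL : 0.9375 ≤ 1.25 * Real.exp (-L) := by
    have := Real.add_one_le_exp (-L)
    norm_num at hL ⊢
    linarith
  have hτ' : -τ ≤ 0.8 := by
    have hs' : 0.625 ≤ s := by nlinarith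
    have : ε / (2 * s) ≤ 0.8 := by
      rw [div_le_iff₀ (by positivity)]
      linarith
    linarith
  have hsqrt : 2 ≤ √(2 * π * ((1 : ℝ≥0) : ℝ)) := by
    rw [NNReal.coe_one, mul_one, Real.le_sqrt (by norm_num) (by positivity)]
    linarith [Real.pi_gt_three]
  refine (gaussianReal_Ioi_le_of_nonpos one_ne_zero hτ.le).trans (ENNReal.ofReal_le_ofReal ?_)
  calc 2⁻¹ + -τ / √(2 * π * ((1 : ℝ≥0) : ℝ)) ≤ 2⁻¹ + 0.8 / 2 := by gcongr
    _ ≤ 1.25 * Real.exp (-L) := by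
        norm_num at hexpL ⊢
        linarith

lemma gaussianReal_Ioi_sub_div_le {ε δ s : ℝ} (hε0 : 0 < ε) (hε1 : ε < 1) (hδ0 : 0 < δ)
    (hδ1 : δ < 1) (hs : √(2 * Real.log (1.25 / δ)) ≤ s) :
    gaussianReal 0 1 (Ioi (s - ε / (2 * s))) ≤ ENNReal.ofReal δ := by
  have hL : 0.2 ≤ Real.log (1.25 / δ) := by
    have := Real.one_sub_inv_le_log_of_pos (x := 1.25 / δ) (by positivity)
    rw [inv_div] at this
    norm_num at this ⊢
    linarith
  have hδL : δ = 1.25 * Real.exp (-Real.log (1.25 / δ)) := by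
    rw [Real.exp_neg, Real.exp_log (by positivity), inv_div]
    ring
  have hs2 : 2 * Real.log (1.25 / δ) ≤ s ^ 2 :=
    (Real.sqrt_le_left ((Real.sqrt_nonneg _).trans hs)).mp hs
  have hs0 : 0 < s := by nlinarith [(Real.sqrt_nonneg _).trans hs]
  rw [hδL]
  rcases le_or_gt 0 (s - ε / (2 * s)) with hτ | hτ
  · exact gaussianReal_Ioi_sub_div_le_of_nonneg hε0 hε1 hs0 hs2 hτ
  · exact gaussianReal_Ioi_sub_div_le_of_neg hε1 hL hs0 hs2 hτ

lemma gaussianReal_setOf_ofReal_exp_mul_gaussianPDF_lt_le {σ ε δ m₁ m₂ : ℝ} (hσ0 : 0 < σ)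
    (hm : m₁ ≠ m₂) (hε0 : 0 < ε) (hε1 : ε < 1) (hδ0 : 0 < δ) (hδ1 : δ < 1)
    (hσ : √(2 * Real.log (1.25 / δ)) * |m₁ - m₂| ≤ σ * ε) :
    gaussianReal m₁ (σ ^ 2).toNNReal {x | ENNReal.ofReal (Real.exp ε) *
        gaussianPDF m₂ (σ ^ 2).toNNReal x < gaussianPDF m₁ (σ ^ 2).toNNReal x}
      ≤ ENNReal.ofReal δ := by
  have hgap : 0 < |m₁ - m₂| := abs_pos.mpr (sub_ne_zero.mpr hm)
  have hτ : σ * ε / |m₁ - m₂| - |m₁ - m₂| / (2 * σ)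
      = σ * ε / |m₁ - m₂| - ε / (2 * (σ * ε / |m₁ - m₂|)) := by
    field_simp
  rw [gaussianReal_setOf_ofReal_exp_mul_gaussianPDF_lt hσ0 hm, hτ]
  exact gaussianReal_Ioi_sub_div_le hε0 hε1 hδ0 hδ1 ((le_div_iff₀ hgap).mpr hσ)

/-- Gaussian mechanism: if `f : D → ℝ` has sensitivity at most `Δf` over adjacent
databases, `ε ∈ (0,1)`, `δ > 0`, and `σ ≥ Δf · √(2 ln(1.25/δ)) / ε`, then the mechanism
`d ↦ f(d) + N(0, σ²)` satisfies `(ε, δ)`-differential privacy. -/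
theorem gaussian_mechanism {D : Type*} (adj : D → D → Prop)
    (f : D → ℝ) (Δf : ℝ) (hsens : ∀ d d', adj d d' → |f d - f d'| ≤ Δf)
    (ε δ σ : ℝ) (hε0 : 0 < ε) (hε1 : ε < 1) (hδ : 0 < δ)
    (hσ : σ ≥ Δf * Real.sqrt (2 * Real.log (1.25 / δ)) / ε) :
    ApproxDPM adj (fun d => ProbabilityTheory.gaussianReal (f d) ((σ ^ 2).toNNReal)) ε δ := by
  intro d d' hadj S hS
  set v := (σ ^ 2).toNNReal
  show gaussianReal (f d) v S ≤ ENNReal.ofReal (Real.exp ε) * gaussianReal (f d') v S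
    + ENNReal.ofReal δ
  rcases le_or_gt 1 δ with hδ1 | hδ1
  · exact (prob_le_one.trans (ENNReal.one_le_ofReal.mpr hδ1)).trans le_add_self
  rcases eq_or_ne (f d) (f d') with heq | hne
  · rw [heq]
    exact le_add_right (le_mul_of_one_le_left' (ENNReal.one_le_ofReal.mpr (Real.one_le_exp hε0.le)))
  have hgap : 0 < |f d - f d'| := abs_pos.mpr (sub_ne_zero.mpr hne)
  have hc : 0 < √(2 * Real.log (1.25 / δ)) :=
    Real.sqrt_pos.mpr (mul_pos two_pos (Real.log_pos ((one_lt_div hδ).mpr (by linarith))))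
  have hσε : √(2 * Real.log (1.25 / δ)) * |f d - f d'| ≤ σ * ε := by
    have := (div_le_iff₀ hε0).mp hσ
    nlinarith [hsens d d' hadj]
  have hσ0 : 0 < σ := pos_of_mul_pos_left ((mul_pos hc hgap).trans_le hσε) hε0.le
  have hv : v ≠ 0 := by simp only [v, ne_eq, Real.toNNReal_eq_zero, not_le]; positivity
  calc gaussianReal (f d) v S
      ≤ ENNReal.ofReal (Real.exp ε) * gaussianReal (f d') v S + gaussianReal (f d) v
          {x | ENNReal.ofReal (Real.exp ε) * gaussianPDF (f d') v x < gaussianPDF (f d) v x} := by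
        simp only [gaussianReal_of_var_ne_zero _ hv]
        exact withDensity_le_mul_add_withDensity_setOf_lt _ (measurable_gaussianPDF _ _)
          (measurable_gaussianPDF _ _) _ hS
    _ ≤ _ := by
        gcongr
        exact gaussianReal_setOf_ofReal_exp_mul_gaussianPDF_lt_le hσ0 hne hε0 hε1 hδ hδ1 hσε
end

section
/- Privacy amplification by subsampling: if a mechanism M satisfies ε-differential privacy with ε ≤ 1, then the mechanism that first selects each of the n database entries independently with probability q and then runs M on the subsample satisfies (O(qε), 0)-differential privacy; more precisely it satisfies ε'-DP with ε' = ln(1 + q(e^ε − 1)) ≤ 2qε. -/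
/-!
Let `d`, `d'` differ only at `i`, and condition on whether `i` is selected. If it is not
(probability `1 - q`), the subsamples of `d` and `d'` coincide; call the resulting probability
of `S` `C`. If it is, the subsample of `d` is adjacent both to that of `d'` and to the one with
`i` dropped, so the conditional probabilities `T`, `T'` satisfy `T ≤ e^ε min(T', C)`. This gives
`q T + (1 - q) C ≤ (1 - q + q e^ε) (q T' + (1 - q) C)`. Finally `log (1 + x) ≤ x` and
`e^ε - 1 ≤ 2ε` on `[0, 1]` give `ε' ≤ 2qε`.
-/

open MeasureTheory

/-- `ε`-differential privacy for a measure-valued mechanism. -/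
def PureDPM {D R : Type*} [MeasurableSpace R] (adj : D → D → Prop)
    (M : D → Measure R) (ε : ℝ) : Prop :=
  ∀ d d', adj d d' → ∀ S : Set R, MeasurableSet S →
    M d S ≤ ENNReal.ofReal (Real.exp ε) * M d' S

/-- Sub-databases: entry `i` is `some (d i)` if selected, `none` otherwise;
two sub-databases are adjacent if they differ in at most one entry. -/
def adjSub {X : Type*} {n : ℕ} (e e' : Fin n → Option X) : Prop :=
  ∃ i, ∀ j, j ≠ i → e j = e' j

/-- The distribution of a random subset of `[n]`, encoded as `Fin n → Bool`, where each
index is included independently with probability `q`. -/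
noncomputable def bernoulliPi (n : ℕ) (q : ℝ) : Measure (Fin n → Bool) :=
  Measure.pi (fun _ =>
    ENNReal.ofReal q • Measure.dirac true + ENNReal.ofReal (1 - q) • Measure.dirac false)

/-- The subsampled mechanism: select each entry independently with probability `q`,
then run `M` on the subsample. -/
noncomputable def subsample {X R : Type*} [MeasurableSpace R] {n : ℕ}
    (q : ℝ) (M : (Fin n → Option X) → Measure R) (d : Fin n → X) : Measure R :=
  (bernoulliPi n q).bind (fun b => M (fun i => if b i then some (d i) else none))

open ENNReal Function

theorem ENNReal.add_le_add_mul_of_le_mul {E T T' C : ℝ≥0∞} (hE : 1 ≤ E) (hT : T ≤ E * T')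
    (hC : T ≤ E * C) : T + C ≤ T' + E * C := by
  rcases le_total C T' with hCT' | hT'C
  · rw [add_comm T']
    exact add_le_add hC hCT'
  · obtain ⟨F, rfl⟩ := le_iff_exists_add.1 hE
    obtain ⟨G, rfl⟩ := le_iff_exists_add.1 hT'C
    calc T + (T' + G) ≤ (1 + F) * T' + (T' + G) := add_le_add_left hT _
      _ ≤ (1 + F) * T' + (T' + G) + F * G := le_self_add
      _ = T' + (1 + F) * (T' + G) := by ring

theorem ENNReal.mixture_le_mul_mixture {a b E T T' C : ℝ≥0∞} (hab : a + b = 1) (hE : 1 ≤ E)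
    (hT : T ≤ E * T') (hC : T ≤ E * C) :
    a * T + b * C ≤ (b + a * E) * (a * T' + b * C) :=
  calc a * T + b * C = (a + b) * (a * T + b * C) := by rw [hab, one_mul]
    _ = a * a * T + a * b * (T + C) + b * b * C := by ring
    _ ≤ a * a * (E * T') + a * b * (T' + E * C) + b * b * C := by
      gcongr a * a * ?_ + a * b * ?_ + _
      exact add_le_add_mul_of_le_mul hE hT hC
    _ = (b + a * E) * (a * T' + b * C) := by ring

theorem MeasureTheory.lintegral_pi_eq_lintegral_update {ι : Type*} [Fintype ι] [DecidableEq ι]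
    {X : ι → Type*} [∀ i, MeasurableSpace (X i)] (μ : ∀ i, Measure (X i))
    [∀ i, IsProbabilityMeasure (μ i)] {f : (∀ i, X i) → ℝ≥0∞} (hf : Measurable f) (i : ι) :
    ∫⁻ x, f x ∂Measure.pi μ = ∫⁻ t, ∫⁻ x, f (update x i t) ∂Measure.pi μ ∂μ i := by
  have hf_upd : Measurable fun p : (∀ i, X i) × X i => f (update p.1 i p.2) :=
    hf.comp measurable_update'
  rw [← lintegral_lintegral_swap hf_upd.aemeasurable]
  refine lintegral_eq_of_lmarginal_eq {i} hf hf_upd.lintegral_prod_right' ?_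
  ext x
  simp [lmarginal_singleton]

noncomputable def bernoulliBool (q : ℝ) : Measure Bool :=
  ENNReal.ofReal q • Measure.dirac true + ENNReal.ofReal (1 - q) • Measure.dirac false

theorem bernoulliPi_eq_pi (n : ℕ) (q : ℝ) :
    bernoulliPi n q = Measure.pi fun _ => bernoulliBool q := rfl

theorem isProbabilityMeasure_bernoulliBool {q : ℝ} (hq0 : 0 ≤ q) (hq1 : q ≤ 1) :
    IsProbabilityMeasure (bernoulliBool q) := by
  constructor
  simp [bernoulliBool, ← ENNReal.ofReal_add hq0 (sub_nonneg.2 hq1)]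

theorem lintegral_bernoulliBool (q : ℝ) (f : Bool → ℝ≥0∞) :
    ∫⁻ t, f t ∂bernoulliBool q = ENNReal.ofReal q * f true + ENNReal.ofReal (1 - q) * f false := by
  simp [bernoulliBool]

def subsampleOf {X : Type*} {n : ℕ} (d : Fin n → X) (b : Fin n → Bool) : Fin n → Option X :=
  fun i => if b i then some (d i) else none

theorem subsample_apply {X R : Type*} [MeasurableSpace R] {n : ℕ} {q : ℝ} (hq0 : 0 ≤ q)
    (hq1 : q ≤ 1) (M : (Fin n → Option X) → Measure R) (d : Fin n → X) (i : Fin n)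
    {S : Set R} (hS : MeasurableSet S) :
    subsample q M d S =
      ENNReal.ofReal q * ∫⁻ b, M (subsampleOf d (update b i true)) S ∂bernoulliPi n q +
        ENNReal.ofReal (1 - q) * ∫⁻ b, M (subsampleOf d (update b i false)) S ∂bernoulliPi n q := by
  have := isProbabilityMeasure_bernoulliBool hq0 hq1
  rw [subsample, Measure.bind_apply hS Measurable.of_discrete.aemeasurable, bernoulliPi_eq_pi,
    lintegral_pi_eq_lintegral_update _ Measurable.of_discrete i, lintegral_bernoulliBool]
  rfl

theorem adjSub_subsampleOf_update {X : Type*} {n : ℕ} {d d' : Fin n → X} {i : Fin n}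
    (hd : ∀ j, j ≠ i → d j = d' j) (b : Fin n → Bool) (s t : Bool) :
    adjSub (subsampleOf d (update b i s)) (subsampleOf d' (update b i t)) :=
  ⟨i, fun j hj => by simp only [subsampleOf, update_of_ne hj, hd j hj]⟩

theorem subsampleOf_update_false {X : Type*} {n : ℕ} {d d' : Fin n → X} {i : Fin n}
    (hd : ∀ j, j ≠ i → d j = d' j) (b : Fin n → Bool) :
    subsampleOf d (update b i false) = subsampleOf d' (update b i false) := by
  funext j
  rcases eq_or_ne j i with rfl | hj
  · simp [subsampleOf]
  · simp only [subsampleOf, update_of_ne hj, hd j hj]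

theorem pureDPM_subsample {X R : Type*} [MeasurableSpace R] {n : ℕ} {q ε : ℝ} (hq0 : 0 ≤ q)
    (hq1 : q ≤ 1) (hε : 0 ≤ ε) {M : (Fin n → Option X) → Measure R}
    (hM : PureDPM adjSub M ε) :
    PureDPM (fun d d' : Fin n → X => ∃ i, ∀ j, j ≠ i → d j = d' j)
      (subsample q M) (Real.log (1 + q * (Real.exp ε - 1))) := by
  rintro d d' ⟨i, hd⟩ S hS
  have hexp : 1 ≤ Real.exp ε := Real.one_le_exp hε
  have hlift : ∀ t, ∫⁻ b, M (subsampleOf d (update b i true)) S ∂bernoulliPi n q ≤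
      ENNReal.ofReal (Real.exp ε) * ∫⁻ b, M (subsampleOf d' (update b i t)) S ∂bernoulliPi n q :=
    fun t => by
      rw [← lintegral_const_mul' _ _ ofReal_ne_top]
      exact lintegral_mono fun b => hM _ _ (adjSub_subsampleOf_update hd b true t) S hS
  have hfactor : ENNReal.ofReal (Real.exp (Real.log (1 + q * (Real.exp ε - 1)))) =
      ENNReal.ofReal (1 - q) + ENNReal.ofReal q * ENNReal.ofReal (Real.exp ε) := by
    rw [Real.exp_log (by nlinarith), ← ofReal_mul hq0,
      ← ofReal_add (sub_nonneg.2 hq1) (by positivity)]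
    ring_nf
  rw [subsample_apply hq0 hq1 M d i hS, subsample_apply hq0 hq1 M d' i hS, hfactor]
  simp_rw [subsampleOf_update_false hd]
  refine mixture_le_mul_mixture ?_ (one_le_ofReal.2 hexp) (hlift true) (hlift false)
  rw [← ofReal_add hq0 (sub_nonneg.2 hq1), add_sub_cancel, ofReal_one]

theorem Real.log_one_add_mul_exp_sub_one_le {q ε : ℝ} (hq : 0 ≤ q) (hε0 : 0 ≤ ε) (hε1 : ε ≤ 1) :
    Real.log (1 + q * (Real.exp ε - 1)) ≤ 2 * q * ε := by
  have habs : |ε| ≤ 1 := by rwa [abs_of_nonneg hε0]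
  have hexp : Real.exp ε - 1 ≤ 2 * ε := by
    simpa [abs_of_nonneg hε0] using (le_abs_self _).trans (Real.abs_exp_sub_one_le habs)
  have hpos : 0 < 1 + q * (Real.exp ε - 1) := by nlinarith [Real.one_le_exp hε0]
  calc Real.log (1 + q * (Real.exp ε - 1)) ≤ q * (Real.exp ε - 1) := by
        linarith [Real.log_le_sub_one_of_pos hpos]
    _ ≤ q * (2 * ε) := by gcongr
    _ = 2 * q * ε := by ring

theorem privacy_amplification_general {X R : Type*} [MeasurableSpace R] {n : ℕ}
    (q ε : ℝ) (hq0 : 0 ≤ q) (hq1 : q ≤ 1) (hε0 : 0 < ε) (hε1 : ε ≤ 1)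
    (M : (Fin n → Option X) → Measure R)
    (hM : PureDPM adjSub M ε) :
    PureDPM (fun d d' : Fin n → X => ∃ i, ∀ j, j ≠ i → d j = d' j)
        (subsample q M) (Real.log (1 + q * (Real.exp ε - 1))) ∧
      Real.log (1 + q * (Real.exp ε - 1)) ≤ 2 * q * ε :=
  ⟨pureDPM_subsample hq0 hq1 hε0.le hM, Real.log_one_add_mul_exp_sub_one_le hq0 hε0.le hε1⟩

/-- Privacy amplification by subsampling: if `M` is `ε`-DP with `ε ≤ 1`, then the
subsampled mechanism is `ε'`-DP with `ε' = ln(1 + q(e^ε − 1))`, and moreover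
`ε' ≤ 2qε` (hence the subsampled mechanism is `(O(qε), 0)`-DP). -/
theorem privacy_amplification {X R : Type*} [MeasurableSpace R] {n : ℕ}
    (q ε : ℝ) (hq0 : 0 ≤ q) (hq1 : q ≤ 1) (hε0 : 0 < ε) (hε1 : ε ≤ 1)
    (M : (Fin n → Option X) → Measure R)
    [∀ e, IsProbabilityMeasure (M e)]
    (hM : PureDPM adjSub M ε) :
    PureDPM (fun d d' : Fin n → X => ∃ i, ∀ j, j ≠ i → d j = d' j)
        (subsample q M) (Real.log (1 + q * (Real.exp ε - 1))) ∧
      Real.log (1 + q * (Real.exp ε - 1)) ≤ 2 * q * ε :=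
  privacy_amplification_general q ε hq0 hq1 hε0 hε1 M hM
end
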